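/- If A_1, …, A_r are pairwise disjoint measurable sets and n_1 + ⋯ + n_r = n, then the n-th factorial moment measure satisfies M_{[n]}(A_1^(n_1) × ⋯ × A_r^(n_r)) = E[(N_ξ(A_1))^{[n_1]} ⋯ (N_ξ(A_r))^{[n_r]}], where x^{[r]} = x(x−1)⋯(x−r+1) is the falling factorial power. -/
import Mathlib


open MeasureTheory
open scoped ENNReal BigOperators Classical

private theorem count_aux (N M r : ℕ) (f : Fin N → Fin r) (p : ℕ → Fin r → Prop)
    (hp : ∀ k j j', p k j → p k j' → j = j') :
    (((Fintype.piFinset (fun _ : Fin N => Finset.range M)).filter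
        (fun g => Function.Injective g ∧ ∀ i, p (g i) (f i))).card : ℕ)
      = ∏ j, (((Finset.range M).filter (fun k => p k j)).card).descFactorial
          (Fintype.card {i : Fin N // f i = j}) := by
  classical
  set S : Fin r → Finset ℕ := fun j => (Finset.range M).filter (fun k => p k j) with hSdef
  set T := ((Fintype.piFinset (fun _ : Fin N => Finset.range M)).filter
        (fun g => Function.Injective g ∧ ∀ i, p (g i) (f i))) with hT
  have hmem : ∀ g, g ∈ T ↔ Function.Injective g ∧ ∀ i, g i ∈ S (f i) := by
    intro g
    simp only [hT, Finset.mem_filter, Fintype.mem_piFinset, hSdef]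
    constructor
    · rintro ⟨h1, h2, h3⟩
      exact ⟨h2, fun i => ⟨h1 i, h3 i⟩⟩
    · rintro ⟨h2, h⟩
      exact ⟨fun i => (h i).1, h2, fun i => (h i).2⟩
  -- key: dependent rewriting helper
  have key : ∀ (F : ∀ j, ({i : Fin N // f i = j} ↪ (S j : Finset ℕ)))
      (i : Fin N) (j : Fin r) (hi : f i = j),
      ((F (f i) ⟨i, rfl⟩ : ℕ)) = ((F j ⟨i, hi⟩ : ℕ)) := by
    rintro F i j rfl; rfl
  have memS : ∀ {k : ℕ} {j : Fin r}, k ∈ S j → p k j := by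
    intro k j hk
    exact (Finset.mem_filter.1 hk).2
  let e : T ≃ ∀ j, ({i : Fin N // f i = j} ↪ (S j : Finset ℕ)) :=
  { toFun := fun g => fun j =>
      ⟨fun i => ⟨g.1 i.1, by obtain ⟨i, rfl⟩ := i; exact ((hmem g.1).1 g.2).2 i⟩, by
        intro a b hab
        have h1 : g.1 a.1 = g.1 b.1 := congrArg Subtype.val hab
        exact Subtype.ext (((hmem g.1).1 g.2).1 h1)⟩,
    invFun := fun F =>
      ⟨fun i => (F (f i) ⟨i, rfl⟩ : ℕ), by
        refine (hmem _).2 ⟨?_, fun i => (F (f i) ⟨i, rfl⟩).2⟩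
        intro i i' h
        have h' : ((F (f i) ⟨i, rfl⟩ : ℕ)) = ((F (f i') ⟨i', rfl⟩ : ℕ)) := h
        have hb : p ((F (f i) ⟨i, rfl⟩ : ℕ)) (f i') := by
          rw [h']; exact memS (F (f i') ⟨i', rfl⟩).2
        have h1 : f i = f i' :=
          hp _ _ _ (memS (F (f i) ⟨i, rfl⟩).2) hb
        have h2 : ((F (f i') ⟨i, h1⟩ : ℕ)) = ((F (f i') ⟨i', rfl⟩ : ℕ)) := by
          rw [← key F i (f i') h1, h']
        have h3 := (F (f i')).injective (Subtype.ext h2)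
        exact congrArg Subtype.val h3⟩,
    left_inv := by
      rintro ⟨g, hg⟩
      rfl
    right_inv := by
      intro F
      funext j
      apply Function.Embedding.ext
      rintro ⟨i, hi⟩
      apply Subtype.ext
      exact key F i j hi }
  calc T.card = Fintype.card T := (Fintype.card_coe T).symm
    _ = Fintype.card (∀ j, ({i : Fin N // f i = j} ↪ (S j : Finset ℕ))) :=
        Fintype.card_congr e
    _ = ∏ j, Fintype.card ({i : Fin N // f i = j} ↪ (S j : Finset ℕ)) :=
        Fintype.card_pi
    _ = ∏ j, ((S j).card).descFactorial (Fintype.card {i : Fin N // f i = j}) := by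
        refine Finset.prod_congr rfl fun j _ => ?_
        rw [Fintype.card_embedding_eq, Fintype.card_coe]

/-- For pairwise disjoint measurable sets `A_1,…,A_r` and `n_1 + ⋯ + n_r = n`, the `n`-th
factorial moment measure satisfies
`M_{[n]}(A_1^(n_1) × ⋯ × A_r^(n_r)) = E[N(A_1)^{[n_1]} ⋯ N(A_r)^{[n_r]}]`,
where the product set is encoded by a block function `f` with exactly `n_j` coordinates in
block `j`, `M_{[n]}` counts injective tuples of point indices, and `x^{[k]}` is the falling
factorial (`Nat.descFactorial`). -/
theorem factorial_moment_measure_eq {X : Type*} {Ω : Type*} [MeasurableSpace Ω]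
    (P : Measure Ω) [IsProbabilityMeasure P]
    (nn : Ω → ℕ) (pts : Ω → ℕ → X)
    (r : ℕ) (A : Fin r → Set X)
    (hdisj : Pairwise (Function.onFun Disjoint A))
    (n : Fin r → ℕ)
    (f : Fin (∑ j, n j) → Fin r)
    (hf : ∀ j, {i | f i = j}.ncard = n j) :
    (∫⁻ ω, (((Fintype.piFinset (fun _ : Fin (∑ j, n j) => Finset.range (nn ω))).filter
        (fun g => Function.Injective g ∧ ∀ i, pts ω (g i) ∈ A (f i))).card : ℝ≥0∞) ∂P)
      = ∫⁻ ω, ∏ j, ((Nat.descFactorial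
          ({i : ℕ | i < nn ω ∧ pts ω i ∈ A j}.ncard) (n j) : ℕ) : ℝ≥0∞) ∂P := by
  refine lintegral_congr fun ω => ?_
  have hp : ∀ (k : ℕ) (j j' : Fin r), pts ω k ∈ A j → pts ω k ∈ A j' → j = j' := by
    intro k j j' h h'
    by_contra hne
    exact Set.disjoint_left.1 (hdisj hne) h h'
  have hcard := count_aux (∑ j, n j) (nn ω) r f (fun k j => pts ω k ∈ A j) hp
  have hfib : ∀ j, Fintype.card {i : Fin (∑ j, n j) // f i = j} = n j := by
    intro j
    rw [← Nat.card_eq_fintype_card]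
    exact (Nat.card_coe_set_eq _).trans (hf j)
  have hset : ∀ j, {i : ℕ | i < nn ω ∧ pts ω i ∈ A j}.ncard
      = ((Finset.range (nn ω)).filter (fun k => pts ω k ∈ A j)).card := by
    intro j
    rw [← Set.ncard_coe_finset]
    congr 1
    ext k
    simp [Finset.mem_filter, Finset.mem_range]
  rw [hcard]
  push_cast
  refine Finset.prod_congr rfl fun j _ => ?_
  rw [hfib j, hset j]
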